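/- Let M ≥ 0 and let (f_n)_n be a sequence of meromorphic functions on 𝔻 such that for every n the Schwarzian derivative S_{f_n} is holomorphic on 𝔻 with sup_{z∈𝔻} |S_{f_n}(z)| ≤ M. Then the sequence of pre-Schwarzians (f_n''/f_n')_n does not converge locally uniformly to the constant ∞ on 𝔻. -/

import Mathlib

open Filter Topology
open scoped Classical

noncomputable section

/-- The chordal (spherical) distance on the Riemann sphere `ℂ ∪ {∞} = OnePoint ℂ`. -/
def sphDist (a b : OnePoint ℂ) : ℝ :=
  Option.elim a (Option.elim b 0 fun w => 2 / Real.sqrt (1 + ‖w‖ ^ 2))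
    fun z =>
      Option.elim b (2 / Real.sqrt (1 + ‖z‖ ^ 2)) fun w =>
        2 * ‖z - w‖ / (Real.sqrt (1 + ‖z‖ ^ 2) * Real.sqrt (1 + ‖w‖ ^ 2))

/-- The set of poles of a function `f : ℂ → ℂ`: the points where `‖f‖` tends to `∞`. -/
def polesOf (f : ℂ → ℂ) : Set ℂ :=
  {z | Filter.Tendsto (fun w => ‖f w‖) (𝓝[≠] z) Filter.atTop}

/-- View a `ℂ`-valued (meromorphic) function as a map into the Riemann sphere:
at its poles the value is `∞`. -/
def toSphere (f : ℂ → ℂ) : ℂ → OnePoint ℂ := fun z =>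
  if z ∈ polesOf f then OnePoint.infty else (f z : OnePoint ℂ)

/-- Locally uniform convergence on `U` of sphere-valued functions, with respect to the
spherical (chordal) metric. -/
def SphLocUnifOn (f : ℕ → ℂ → OnePoint ℂ) (g : ℂ → OnePoint ℂ) (U : Set ℂ) : Prop :=
  ∀ ε > (0 : ℝ), ∀ x ∈ U, ∃ t ∈ 𝓝[U] x,
    ∀ᶠ n in Filter.atTop, ∀ y ∈ t, sphDist (f n y) (g y) < ε

/-- The quotient `f^{(j+1)}/f^{(j)}` of successive derivatives of `f`. -/
def derivQuot (j : ℕ) (f : ℂ → ℂ) : ℂ → ℂ := fun z =>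
  iteratedDeriv (j + 1) f z / iteratedDeriv j f z

/-- The derived set of `E` with respect to `D`: accumulation points of `E` lying in `D`. -/
def derivedSetIn (D E : Set ℂ) : Set ℂ := {z ∈ D | AccPt z (Filter.principal E)}

/-- Iterated derived sets of `E` with respect to `D`. -/
def iteratedDerivedSetIn (D : Set ℂ) : ℕ → Set ℂ → Set ℂ
  | 0, E => E
  | k + 1, E => derivedSetIn D (iteratedDerivedSetIn D k E)

/-- A sequence of functions is `Q_m`-normal on `D`: every subsequence has a further
subsequence converging locally uniformly, with respect to the spherical metric, on `D \ E`
for some set `E ⊆ D` whose `m`-th derived set with respect to `D` is empty. -/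
def QmNormalSeqOn (m : ℕ) (D : Set ℂ) (f : ℕ → ℂ → ℂ) : Prop :=
  ∀ φ : ℕ → ℕ, StrictMono φ → ∃ ψ : ℕ → ℕ, StrictMono ψ ∧
    ∃ E ⊆ D, iteratedDerivedSetIn D m E = ∅ ∧
      ∃ g : ℂ → OnePoint ℂ, SphLocUnifOn (fun k => toSphere (f (φ (ψ k)))) g (D \ E)


/-- The open unit disk in `ℂ`. -/
def unitDisk : Set ℂ := Metric.ball 0 1

/-- The pre-Schwarzian `f''/f'` of `f`. -/
def preSchwarzian (f : ℂ → ℂ) : ℂ → ℂ := fun z => deriv (deriv f) z / deriv f z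

/-- The Schwarzian derivative `S_f = (f''/f')' - (1/2) (f''/f')²` of `f`. -/
def schwarzian (f : ℂ → ℂ) : ℂ → ℂ := fun z =>
  deriv (preSchwarzian f) z - (1 / 2) * preSchwarzian f z ^ 2

/-- `f` has a Schwarzian derivative that is holomorphic on the unit disk and bounded by `M`
there: there is a function `S`, holomorphic on `𝔻` and bounded by `M` on `𝔻`, agreeing with
the pointwise Schwarzian of `f` wherever the latter formula is meaningful (i.e. where `f` is
analytic and `f' ≠ 0`). -/
def HasBddHoloSchwarzian (f : ℂ → ℂ) (M : ℝ) : Prop :=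
  ∃ S : ℂ → ℂ, DifferentiableOn ℂ S unitDisk ∧ (∀ z ∈ unitDisk, ‖S z‖ ≤ M) ∧
    ∀ z ∈ unitDisk, AnalyticAt ℂ f z → deriv f z ≠ 0 → S z = schwarzian f z


private lemma analyticAt_deriv' {h : ℂ → ℂ} {x : ℂ} (hh : AnalyticAt ℂ h x) :
    AnalyticAt ℂ (deriv h) x := by
  rcases eventually_nhds_iff.mp hh.eventually_analyticAt with ⟨s, hsub, hso, hxs⟩
  have hs : AnalyticOnNhd ℂ h s := fun y hy => hsub y hy
  exact hs.deriv x hxs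

private lemma meromorphicAt_deriv' {h : ℂ → ℂ} {x : ℂ} (hh : MeromorphicAt h x) :
    MeromorphicAt (deriv h) x := by
  obtain ⟨m, hg⟩ := hh
  have hh' : MeromorphicAt h x := ⟨m, hg⟩
  set g : ℂ → ℂ := fun z => (z - x) ^ m • h z with hgdef
  apply MeromorphicAt.iff_eventuallyEq_zpow_smul_analyticAt.mpr
  refine ⟨-(m+1), fun z => (z - x) * deriv g z - m * g z, ?_, ?_⟩
  · exact ((analyticAt_id.sub analyticAt_const).mul (analyticAt_deriv' hg)).sub
      (analyticAt_const.mul hg)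
  · filter_upwards [hh'.eventually_analyticAt, self_mem_nhdsWithin] with z hz hzx
    have hzx' : z - x ≠ 0 := sub_ne_zero.mpr hzx
    have h1 : HasDerivAt (fun w : ℂ => w - x) 1 z := (hasDerivAt_id z).sub_const x
    have h2 : HasDerivAt (fun w : ℂ => (w - x) ^ m) ((m : ℂ) * (z - x) ^ (m - 1) * 1) z :=
      h1.pow m
    have h3 : HasDerivAt h (deriv h z) z := hz.differentiableAt.hasDerivAt
    have h4 : HasDerivAt g ((m : ℂ) * (z - x) ^ (m - 1) * 1 * h z
        + (z - x) ^ m * deriv h z) z := by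
      exact h2.mul h3
    have hdg : deriv g z = (m : ℂ) * (z - x) ^ (m - 1) * 1 * h z + (z - x) ^ m * deriv h z :=
      h4.deriv
    rw [hdg]
    simp only [smul_eq_mul, hgdef, mul_one]
    rcases m with _ | k
    · simp [zpow_neg, hzx']
    · have hms : (k + 1) - 1 = k := rfl
      rw [hms]
      rw [show (-(↑(k+1) + 1) : ℤ) = -((k + 2 : ℕ) : ℤ) by push_cast; ring]
      rw [zpow_neg, zpow_natCast]
      field_simp
      ring

private lemma mero_dichotomy' {h : ℂ → ℂ} {x : ℂ} (hh : MeromorphicAt h x) :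
    (∀ᶠ z in 𝓝[≠] x, h z = 0) ∨ (∀ᶠ z in 𝓝[≠] x, h z ≠ 0) := by
  rcases eq_or_ne (meromorphicOrderAt h x) ⊤ with ht | ht
  · exact Or.inl (meromorphicOrderAt_eq_top_iff.mp ht)
  · right
    obtain ⟨k, hk⟩ := WithTop.ne_top_iff_exists.mp ht
    obtain ⟨g, hga, hgx, hgf⟩ := (meromorphicOrderAt_eq_int_iff hh).mp hk.symm
    have hgz : ∀ᶠ z in 𝓝[≠] x, g z ≠ 0 :=
      (hga.continuousAt.eventually_ne hgx).filter_mono nhdsWithin_le_nhds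
    filter_upwards [hgf, hgz, self_mem_nhdsWithin] with z h1 h2 h3
    rw [h1, smul_eq_mul]
    exact mul_ne_zero (zpow_ne_zero _ (sub_ne_zero.mpr h3)) h2

private lemma not_pole_of_continuousAt' {p : ℂ → ℂ} {w : ℂ} (h : ContinuousAt p w) :
    w ∉ polesOf p := by
  intro hw
  have hp : Filter.Tendsto (fun z => ‖p z‖) (𝓝[≠] w) Filter.atTop := hw
  have h1 : Filter.Tendsto (fun z => ‖p z‖) (𝓝[≠] w) (𝓝 ‖p w‖) :=
    (h.norm.tendsto).mono_left nhdsWithin_le_nhds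
  have h2 := hp.eventually_ge_atTop (‖p w‖ + 1)
  have h3 := h1.eventually_lt_const (lt_add_one ‖p w‖)
  obtain ⟨z, hz1, hz2⟩ := (h2.and h3).exists
  linarith

private lemma sph_unif_on_compact {F : ℕ → ℂ → OnePoint ℂ} {g : ℂ → OnePoint ℂ} {U K : Set ℂ}
    (h : SphLocUnifOn F g U) (hK : IsCompact K) (hKU : K ⊆ U) {ε : ℝ} (hε : 0 < ε) :
    ∀ᶠ n in atTop, ∀ y ∈ K, sphDist (F n y) (g y) < ε := by
  choose t ht hev using fun x (hx : x ∈ K) => h ε hε x (hKU hx)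
  have hV : ∀ x (hx : x ∈ K), ∃ V, IsOpen V ∧ x ∈ V ∧ V ∩ U ⊆ t x hx := by
    intro x hx
    rcases mem_nhdsWithin.mp (ht x hx) with ⟨V, hVo, hxV, hVU⟩
    exact ⟨V, hVo, hxV, hVU⟩
  choose V hVo hxV hVsub using hV
  rcases hK.elim_nhds_subcover' V (fun x hx => (hVo x hx).mem_nhds (hxV x hx)) with ⟨s, hs⟩
  have hall : ∀ᶠ n in atTop, ∀ x ∈ s, ∀ y ∈ t x.1 x.2, sphDist (F n y) (g y) < ε :=
    (eventually_all_finset s).mpr fun x _ => hev x.1 x.2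
  filter_upwards [hall] with n hn y hy
  rcases Set.mem_iUnion₂.mp (hs hy) with ⟨x, hxs, hyV⟩
  exact hn x hxs y (hVsub x.1 x.2 ⟨hyV, hKU hy⟩)

set_option maxHeartbeats 2000000 in
/-- **Proposition (pre-Schwarzians do not converge to `∞`).**
Let `M ≥ 0` and let the `fₙ` be meromorphic on `𝔻` with Schwarzian derivatives holomorphic
on `𝔻` and bounded by `M` there. Then the sequence of pre-Schwarzians `(fₙ''/fₙ')ₙ` does not
converge locally uniformly to the constant `∞` on `𝔻`. -/
theorem preSchwarzians_not_to_infty (M : ℝ) (hM : 0 ≤ M)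
    (f : ℕ → ℂ → ℂ)
    (hf : ∀ n, MeromorphicOn (f n) unitDisk ∧ HasBddHoloSchwarzian (f n) M) :
    ¬ SphLocUnifOn (fun n => toSphere (preSchwarzian (f n)))
      (fun _ => OnePoint.infty) unitDisk := by
  intro h
  set K : Set ℂ := Metric.closedBall 0 (1/2) with hKdef
  have hKU : K ⊆ unitDisk := by
    intro z hz
    have h1 : dist z 0 ≤ 1/2 := Metric.mem_closedBall.mp hz
    exact Metric.mem_ball.mpr (lt_of_le_of_lt h1 (by norm_num))
  have hKc : IsCompact K := isCompact_closedBall 0 (1/2)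
  set δ : ℝ := min (1/100) (1/(4*(M+1))) with hδdef
  have hδ0 : 0 < δ := lt_min (by norm_num) (by positivity)
  have hδ1 : δ ≤ 1/100 := min_le_left _ _
  have hMδ : M * δ ≤ 1/4 := by
    have h2 : δ ≤ 1/(4*(M+1)) := min_le_right _ _
    have h3 : (0:ℝ) < 4*(M+1) := by linarith
    rw [le_div_iff₀ h3] at h2
    nlinarith
  set R : ℝ := 1/δ with hRdef
  have hR0 : 0 < R := by positivity
  have hε0 : (0:ℝ) < 2 / Real.sqrt (1 + R^2) := by positivity
  obtain ⟨n, hn⟩ := (sph_unif_on_compact h hKc hKU hε0).exists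
  set p : ℂ → ℂ := preSchwarzian (f n) with hpdef
  obtain ⟨S, hS1, hS2, hS3⟩ := (hf n).2
  have hmero := (hf n).1
  -- Step 1 : off poles, p is large on K
  have hbig : ∀ y ∈ K, y ∉ polesOf p → R < ‖p y‖ := by
    intro y hyK hyp
    have hd := hn y hyK
    have he : toSphere p y = ((p y : OnePoint ℂ)) := if_neg hyp
    rw [he] at hd
    have hd' : 2 / Real.sqrt (1 + ‖p y‖^2) < 2 / Real.sqrt (1 + R^2) := hd
    have hs1 : 0 < Real.sqrt (1 + R^2) := Real.sqrt_pos.mpr (by positivity)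
    have hs2 : 0 < Real.sqrt (1 + ‖p y‖^2) := Real.sqrt_pos.mpr (by positivity)
    have hlt : Real.sqrt (1 + R^2) < Real.sqrt (1 + ‖p y‖^2) := by
      rw [div_lt_div_iff₀ hs2 hs1] at hd'
      nlinarith
    have hlt2 : 1 + R^2 < 1 + ‖p y‖^2 := (Real.sqrt_lt_sqrt_iff (by positivity)).mp hlt
    exact lt_of_pow_lt_pow_left₀ 2 (norm_nonneg _) (by nlinarith)
  -- Step 2 : every point of K has a punctured neighbourhood of good points
  have hgood : ∀ z ∈ K, ∀ᶠ w in 𝓝[≠] z,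
      AnalyticAt ℂ (f n) w ∧ deriv (f n) w ≠ 0 ∧ w ∉ polesOf p := by
    intro z hz
    have hm : MeromorphicAt (f n) z := hmero z (hKU hz)
    have hfa := hm.eventually_analyticAt
    have hm' : MeromorphicAt (deriv (f n)) z := meromorphicAt_deriv' hm
    rcases mero_dichotomy' hm' with hzero | hnz
    · exfalso
      rcases mem_nhdsWithin.mp hzero with ⟨V, hVo, hzV, hVsub⟩
      rcases Metric.isOpen_iff.mp hVo z hzV with ⟨ρ, hρ0, hρV⟩
      obtain ⟨w, hwK, hwz, hwball⟩ : ∃ w, w ∈ K ∧ w ≠ z ∧ w ∈ Metric.ball z ρ := by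
        by_cases hz0 : z = 0
        · refine ⟨((min ρ 1)/2 : ℝ), ?_, ?_, ?_⟩
          · rw [hKdef, Metric.mem_closedBall, dist_zero_right]
            rw [Complex.norm_real, Real.norm_eq_abs, abs_of_nonneg (by positivity)]
            have : min ρ 1 ≤ 1 := min_le_right _ _
            linarith
          · rw [hz0]
            intro hc
            have : ((min ρ 1)/2 : ℝ) = 0 := by exact_mod_cast hc
            have : (0:ℝ) < min ρ 1 := lt_min hρ0 one_pos
            linarith
          · rw [hz0, Metric.mem_ball, dist_zero_right]
            rw [Complex.norm_real, Real.norm_eq_abs, abs_of_nonneg (by positivity)]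
            have : min ρ 1 ≤ ρ := min_le_left _ _
            linarith [lt_min hρ0 one_pos]
        · have hz0' : (0:ℝ) < ‖z‖ := norm_pos_iff.mpr hz0
          set τ : ℝ := min (ρ/(2*‖z‖)) (1/2) with hτdef
          have hτ0 : 0 < τ := lt_min (by positivity) (by norm_num)
          have hτ1 : τ ≤ 1/2 := min_le_right _ _
          refine ⟨((1 - τ : ℝ) : ℂ) * z, ?_, ?_, ?_⟩
          · rw [hKdef, Metric.mem_closedBall, dist_zero_right, norm_mul,
              Complex.norm_real, Real.norm_eq_abs, abs_of_nonneg (by linarith)]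
            have hzK : ‖z‖ ≤ 1/2 := by
              have := Metric.mem_closedBall.mp hz
              rwa [dist_zero_right] at this
            nlinarith
          · intro hc
            have hc' : ((1 - τ : ℝ) : ℂ) * z - z = 0 := by rw [hc]; ring
            have : ((-τ : ℝ) : ℂ) * z = 0 := by
              rw [← hc']; push_cast; ring
            rcases mul_eq_zero.mp this with h' | h'
            · have : (-τ : ℝ) = 0 := by exact_mod_cast h'
              linarith
            · exact hz0 h'
          · rw [Metric.mem_ball, dist_eq_norm]
            have he : ((1 - τ : ℝ) : ℂ) * z - z = ((-τ : ℝ) : ℂ) * z := by push_cast; ring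
            rw [he, norm_mul, Complex.norm_real, Real.norm_eq_abs, abs_of_nonpos (by linarith),
              neg_neg]
            have hτρ : τ ≤ ρ/(2*‖z‖) := min_le_left _ _
            have h4 : τ * ‖z‖ ≤ ρ/(2*‖z‖) * ‖z‖ := by nlinarith
            have hne : ‖z‖ ≠ 0 := by
              exact ne_of_gt hz0'
            have h5 : ρ/(2*‖z‖) * ‖z‖ = ρ/2 := by
              field_simp
            linarith
      have hwOpen : ∀ᶠ u in 𝓝 w, deriv (f n) u = 0 := by
        have hsub2 : Metric.ball z ρ ∩ {z}ᶜ ⊆ {u | deriv (f n) u = 0} := by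
          rintro u ⟨hu1, hu2⟩
          exact hVsub ⟨hρV hu1, hu2⟩
        exact eventually_nhds_iff.mpr ⟨_, fun u hu => hsub2 hu,
          Metric.isOpen_ball.inter isOpen_compl_singleton, hwball, hwz⟩
      have hp0 : ∀ᶠ u in 𝓝 w, p u = 0 := by
        filter_upwards [hwOpen] with u hu
        simp [hpdef, preSchwarzian, hu]
      have hwnp : w ∉ polesOf p := by
        intro hw
        have hw' : Filter.Tendsto (fun u => ‖p u‖) (𝓝[≠] w) Filter.atTop := hw
        have h2 := hw'.eventually_ge_atTop 1
        have h3 : ∀ᶠ u in 𝓝[≠] w, ‖p u‖ = 0 := by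
          filter_upwards [hp0.filter_mono nhdsWithin_le_nhds] with u hu
          simp [hu]
        obtain ⟨u, hu1, hu2⟩ := (h2.and h3).exists
        rw [hu2] at hu1; linarith
      have hcon := hbig w hwK hwnp
      have hpw : p w = 0 := hp0.self_of_nhds
      rw [hpw] at hcon
      simp at hcon
      linarith
    · filter_upwards [hfa, hnz] with w h1 h2
      refine ⟨h1, h2, ?_⟩
      have hpa : AnalyticAt ℂ p w :=
        (analyticAt_deriv' (analyticAt_deriv' h1)).div (analyticAt_deriv' h1) h2
      exact not_pole_of_continuousAt' hpa.continuousAt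
  -- Step 3 : the bad set is finite
  set A : Set ℂ :=
    {w ∈ K | ¬(AnalyticAt ℂ (f n) w ∧ deriv (f n) w ≠ 0 ∧ w ∉ polesOf p)} with hAdef
  have hAfin : A.Finite := by
    have hV : ∀ z (hz : z ∈ K), ∃ V, IsOpen V ∧ z ∈ V ∧ A ∩ V ⊆ {z} := by
      intro z hz
      rcases mem_nhdsWithin.mp (hgood z hz) with ⟨V, hVo, hzV, hVsub⟩
      refine ⟨V, hVo, hzV, ?_⟩
      rintro w ⟨hwA, hwV⟩
      by_contra hwz
      have hwz' : w ≠ z := fun hc => hwz (by simp [hc])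
      exact hwA.2 (hVsub ⟨hwV, hwz'⟩)
    choose V hVo hzV hVsub using hV
    rcases hKc.elim_nhds_subcover' V (fun x hx => (hVo x hx).mem_nhds (hzV x hx)) with ⟨s, hs⟩
    apply Set.Finite.subset (s.finite_toSet.image (fun x => (x.1 : ℂ)))
    intro w hwA
    rcases Set.mem_iUnion₂.mp (hs hwA.1) with ⟨x, hxs, hwV⟩
    have hw : w ∈ ({x.1} : Set ℂ) := hVsub x.1 x.2 ⟨hwA, hwV⟩
    exact ⟨x, hxs, (Set.mem_singleton_iff.mp hw).symm⟩
  -- Step 4 : choose a base point and a direction avoiding the bad set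
  have hT2 : ((fun r : ℝ => (r:ℂ)) '' Set.Ioo 0 (1/8)).Infinite :=
    (Set.Ioo_infinite (by norm_num)).image (Complex.ofReal_injective.injOn)
  obtain ⟨x₀, hx₀T, hx₀A⟩ := (hT2.diff hAfin).nonempty
  have hx₀n : ‖x₀‖ ≤ 1/8 := by
    rcases hx₀T with ⟨r, hr, rfl⟩
    rw [Complex.norm_real, Real.norm_eq_abs, abs_of_nonneg hr.1.le]
    exact hr.2.le
  have hx₀K : x₀ ∈ K := by
    rw [hKdef, Metric.mem_closedBall, dist_zero_right]
    linarith
  have hYinj : Set.InjOn (fun θ : ℝ => x₀ + (1/4 : ℂ) * Complex.exp (θ * Complex.I))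
      (Set.Icc 0 Real.pi) := by
    intro a ha b hb hab
    simp only [add_right_inj] at hab
    have h2 : Complex.exp ((a:ℂ) * Complex.I) = Complex.exp ((b:ℂ) * Complex.I) := by
      have h4 : ((1:ℂ)/4) ≠ 0 := by norm_num
      exact mul_left_cancel₀ h4 hab
    have h3 := congrArg Complex.re h2
    rw [Complex.exp_ofReal_mul_I_re, Complex.exp_ofReal_mul_I_re] at h3
    exact Real.injOn_cos ha hb h3
  have hYinf : ((fun θ : ℝ => x₀ + (1/4:ℂ) * Complex.exp (θ * Complex.I)) ''
      Set.Icc 0 Real.pi).Infinite :=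
    (Set.Icc_infinite Real.pi_pos).image hYinj
  obtain ⟨y, hyY, hyBad⟩ :=
    (hYinf.diff (hAfin.image (fun b => x₀ + (b - x₀) / ((4:ℂ) * ‖b - x₀‖)))).nonempty
  have hyx : ‖y - x₀‖ = 1/4 := by
    rcases hyY with ⟨θ, hθ, rfl⟩
    simp only [add_sub_cancel_left, norm_mul]
    rw [Complex.norm_exp_ofReal_mul_I]
    norm_num
  -- Step 5 : all points of the segment are good
  have hseg : ∀ w ∈ segment ℝ x₀ y, w ∈ K ∧
      (AnalyticAt ℂ (f n) w ∧ deriv (f n) w ≠ 0 ∧ w ∉ polesOf p) := by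
    intro w hw
    rw [segment_eq_image'] at hw
    rcases hw with ⟨θ, hθ, rfl⟩
    have hwK : x₀ + θ • (y - x₀) ∈ K := by
      rw [hKdef, Metric.mem_closedBall, dist_zero_right]
      have h1 : ‖x₀ + θ • (y - x₀)‖ ≤ ‖x₀‖ + θ * ‖y - x₀‖ := by
        refine (norm_add_le _ _).trans ?_
        rw [norm_smul, Real.norm_eq_abs, abs_of_nonneg hθ.1]
      rw [hyx] at h1
      have := hθ.2
      linarith
    refine ⟨hwK, ?_⟩
    by_contra hcon
    have hwA : x₀ + θ • (y - x₀) ∈ A := ⟨hwK, hcon⟩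
    have hθ0 : θ ≠ 0 := by
      intro h0
      have hx : x₀ + θ • (y - x₀) = x₀ := by rw [h0]; simp
      rw [hx] at hwA
      exact hx₀A hwA
    have hθC : (θ:ℂ) ≠ 0 := by exact_mod_cast hθ0
    apply hyBad
    refine ⟨x₀ + θ • (y - x₀), hwA, ?_⟩
    have hwx0 : (x₀ + θ • (y - x₀)) - x₀ = (θ:ℂ) * (y - x₀) := by
      rw [Complex.real_smul]; ring
    have hnorm : ‖(x₀ + θ • (y - x₀)) - x₀‖ = θ * (1/4) := by
      rw [hwx0, norm_mul, Complex.norm_real, Real.norm_eq_abs, abs_of_nonneg hθ.1, hyx]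
    show x₀ + ((x₀ + θ • (y - x₀)) - x₀) / ((4:ℂ) * (‖(x₀ + θ • (y - x₀)) - x₀‖ : ℂ)) = y
    rw [hnorm, hwx0]
    have h44 : ((θ * (1/4) : ℝ) : ℂ) = (θ:ℂ) * (1/4) := by push_cast; ring
    rw [h44]
    have h45 : (4:ℂ) * ((θ:ℂ) * (1/4)) = (θ:ℂ) := by ring
    rw [h45, mul_div_cancel_left₀ _ hθC]
    ring
  -- Step 6 : the derivative estimate along the segment
  set q : ℂ → ℂ := fun z => (p z)⁻¹ with hqdef
  set D : ℂ → ℂ := fun w => -(deriv p w) / p w ^ 2 + 1/2 with hDdef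
  have hqsmall : ∀ w, w ∈ K → w ∉ polesOf p → ‖q w‖ < δ := by
    intro w h1 h2
    have h3 := hbig w h1 h2
    have h4 : ‖p w‖⁻¹ < R⁻¹ := inv_strictAnti₀ hR0 h3
    have h5 : R⁻¹ = δ := by rw [hRdef]; simp
    rw [h5] at h4
    simpa [hqdef] using h4
  have hderiv : ∀ w ∈ segment ℝ x₀ y,
      HasDerivAt (fun z => q z + (1/2 : ℂ) * z) (D w) w ∧ ‖D w‖ ≤ M * δ^2 := by
    intro w hw
    obtain ⟨hwK, h1, h2, h3⟩ := hseg w hw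
    have hpw : R < ‖p w‖ := hbig w hwK h3
    have hpne : p w ≠ 0 := by
      intro h0
      rw [h0, norm_zero] at hpw
      linarith
    have hpa : AnalyticAt ℂ p w :=
      (analyticAt_deriv' (analyticAt_deriv' h1)).div (analyticAt_deriv' h1) h2
    have hdq : HasDerivAt q (-(deriv p w) / p w ^ 2) w :=
      (hpa.differentiableAt.hasDerivAt).inv hpne
    have hlin : HasDerivAt (fun z : ℂ => (1/2 : ℂ) * z) (1/2) w := by
      simpa using (hasDerivAt_id w).const_mul (1/2 : ℂ)
    refine ⟨hdq.add hlin, ?_⟩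
    have hSw : S w = deriv p w - (1/2) * p w ^ 2 := hS3 w (hKU hwK) h1 h2
    have hDw : D w = -(S w) / p w ^ 2 := by
      rw [hDdef]
      simp only
      rw [hSw]
      field_simp
      ring
    rw [hDw, norm_div, norm_neg, norm_pow]
    have hb1 : ‖S w‖ ≤ M := hS2 w (hKU hwK)
    have hb2 : R^2 ≤ ‖p w‖^2 := by nlinarith
    calc ‖S w‖ / ‖p w‖^2 ≤ M / R^2 := div_le_div₀ hM hb1 (by positivity) hb2
      _ = M * δ^2 := by rw [hRdef]; field_simp
  -- Step 7 : mean value inequality and contradiction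
  have hmvt : ‖(q y + (1/2:ℂ) * y) - (q x₀ + (1/2:ℂ) * x₀)‖ ≤ (M*δ^2) * ‖y - x₀‖ := by
    have hconv : Convex ℝ (segment ℝ x₀ y) := convex_segment x₀ y
    have hF : ∀ w ∈ segment ℝ x₀ y, HasFDerivWithinAt (fun z => q z + (1/2:ℂ) * z)
        (((1 : ℂ →L[ℂ] ℂ).smulRight (D w)).restrictScalars ℝ) (segment ℝ x₀ y) w := by
      intro w hw
      exact (((hderiv w hw).1.hasFDerivAt).restrictScalars ℝ).hasFDerivWithinAt
    have hB : ∀ w ∈ segment ℝ x₀ y,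
        ‖((1 : ℂ →L[ℂ] ℂ).smulRight (D w)).restrictScalars ℝ‖ ≤ M*δ^2 := by
      intro w hw
      rw [ContinuousLinearMap.norm_restrictScalars, ContinuousLinearMap.norm_smulRight_apply,
        ContinuousLinearMap.one_def, ContinuousLinearMap.norm_id, one_mul]
      exact (hderiv w hw).2
    exact hconv.norm_image_sub_le_of_norm_hasFDerivWithin_le hF hB
      (left_mem_segment ℝ x₀ y) (right_mem_segment ℝ x₀ y)
  obtain ⟨hyK, hy1, hy2, hy3⟩ := hseg y (right_mem_segment ℝ x₀ y)
  obtain ⟨hx₀K', hx₀1, hx₀2, hx₀3⟩ := hseg x₀ (left_mem_segment ℝ x₀ y)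
  have e1 : ‖q y‖ < δ := hqsmall y hyK hy3
  have e2 : ‖q x₀‖ < δ := hqsmall x₀ hx₀K' hx₀3
  have e3 : (1/2:ℂ) * (y - x₀) =
      ((q y + (1/2:ℂ) * y) - (q x₀ + (1/2:ℂ) * x₀)) - (q y - q x₀) := by ring
  have e4 : ‖(1/2:ℂ) * (y - x₀)‖ = 1/8 := by
    rw [norm_mul, hyx]
    norm_num
  have e5 : (1/8 : ℝ) ≤ (M*δ^2) * (1/4) + (‖q y‖ + ‖q x₀‖) := by
    rw [← e4, e3]
    calc ‖_ - (q y - q x₀)‖ ≤ ‖(q y + (1/2:ℂ) * y) - (q x₀ + (1/2:ℂ) * x₀)‖ + ‖q y - q x₀‖ :=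
          norm_sub_le _ _
      _ ≤ (M*δ^2) * (1/4) + (‖q y‖ + ‖q x₀‖) := by
          rw [← hyx] at *
          exact add_le_add (by rw [hyx] at hmvt ⊢; simpa [hyx] using hmvt)
            (norm_sub_le _ _)
  have hfinal : M*δ^2 ≤ (1/4) * δ := by nlinarith
  nlinarith

end
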